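/- For every γ ∈ (0,2), setting Q = γ/2 + 2/γ, and for every complex number z with 0 < Re z < Q, the function t ↦ ( (Q/2 − z)² e^{−t} − sinh²((Q/2 − z)t/2) / ( sinh(γt/4) · sinh(t/γ) ) ) / t is (Bochner/Lebesgue) integrable on (0,∞). (This integral defines ln Υ_{γ/2}(z) on the strip 0 < Re z < Q.) -/

import Mathlib

/-!
Write `a = Q/2 - z`. Near `0`, `sinh w = w + O(‖w‖³)`, so
`a² sinh(γt/4) sinh(t/γ) - sinh²(at/2) = O(t⁴)`: the `t²` terms cancel because
`(γ/4)(1/γ) = 1/4`. Since the denominator `sinh(γt/4) sinh(t/γ)` is at least `t²/4`, the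
integrand is bounded on `(0, 1]`. For `t ≥ 1`, `‖sinh(at/2)‖² ≤ exp(|Re a| t)` while
`sinh(γt/4) sinh(t/γ) ≥ c exp(Q t/2)`, so the integrand is `O(exp(-t) + exp(-(Q/2 - |Re a|) t))`,
and `|Re a| < Q/2` is exactly `0 < Re z < Q`.
-/

open MeasureTheory Set

lemma norm_mul_sub_mul_le {R : Type*} [SeminormedRing R] (x y x₀ y₀ : R) :
    ‖x * y - x₀ * y₀‖ ≤ ‖x₀‖ * ‖y - y₀‖ + ‖x - x₀‖ * ‖y₀‖ + ‖x - x₀‖ * ‖y - y₀‖ := by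
  calc ‖x * y - x₀ * y₀‖ = ‖x₀ * (y - y₀) + (x - x₀) * y₀ + (x - x₀) * (y - y₀)‖ := by
        congr 1; noncomm_ring
    _ ≤ _ := norm_add₃_le.trans (by gcongr <;> exact norm_mul_le _ _)

lemma Real.sinh_mul_exp_le_exp_mul_sinh {x₀ x : ℝ} (h : x₀ ≤ x) :
    Real.sinh x₀ * Real.exp x ≤ Real.exp x₀ * Real.sinh x := by
  have key : Real.exp x₀ * Real.sinh x - Real.sinh x₀ * Real.exp x
      = (Real.exp (x - x₀) - Real.exp (x₀ - x)) / 2 := by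
    simp only [Real.sinh_eq, Real.exp_sub, Real.exp_neg]; field_simp; ring
  linarith [Real.exp_le_exp.2 (show x₀ - x ≤ x - x₀ by linarith)]

namespace Complex

lemma norm_sinh_le_exp_abs_re (w : ℂ) : ‖sinh w‖ ≤ Real.exp |w.re| := by
  have hw : ‖exp w‖ ≤ Real.exp |w.re| := by
    rw [norm_exp]; exact Real.exp_le_exp.2 (le_abs_self _)
  have hnw : ‖exp (-w)‖ ≤ Real.exp |w.re| := by
    rw [norm_exp, neg_re]; exact Real.exp_le_exp.2 (neg_le_abs _)
  calc ‖sinh w‖ = ‖exp w - exp (-w)‖ / 2 := by rw [sinh, norm_div, norm_ofNat]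
    _ ≤ (‖exp w‖ + ‖exp (-w)‖) / 2 := by gcongr; exact norm_sub_le _ _
    _ ≤ Real.exp |w.re| := by linarith

lemma norm_sinh_sub_self_le (w : ℂ) : ‖sinh w - w‖ ≤ ‖w‖ ^ 3 * Real.exp ‖w‖ := by
  have hpos := norm_exp_sub_sum_le_norm_mul_exp w 3
  have hneg := norm_exp_sub_sum_le_norm_mul_exp (-w) 3
  rw [norm_neg] at hneg
  have hsplit : sinh w - w = ((exp w - ∑ m ∈ Finset.range 3, w ^ m / m.factorial)
      - (exp (-w) - ∑ m ∈ Finset.range 3, (-w) ^ m / m.factorial)) / 2 := by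
    simp only [sinh, Finset.sum_range_succ, Finset.sum_range_zero, Nat.factorial]; push_cast; ring
  rw [hsplit, norm_div, norm_ofNat]
  linarith [norm_sub_le (exp w - ∑ m ∈ Finset.range 3, w ^ m / m.factorial)
      (exp (-w) - ∑ m ∈ Finset.range 3, (-w) ^ m / m.factorial)]

lemma norm_sinh_mul_sub_le (c : ℂ) {t : ℝ} (ht : |t| ≤ 1) :
    ‖sinh (c * t) - c * t‖ ≤ ‖c‖ ^ 3 * Real.exp ‖c‖ * |t| ^ 3 := by
  have hct : ‖c * t‖ = ‖c‖ * |t| := by rw [norm_mul, norm_real, Real.norm_eq_abs]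
  calc ‖sinh (c * t) - c * t‖ ≤ ‖c * t‖ ^ 3 * Real.exp ‖c * t‖ := norm_sinh_sub_self_le _
    _ ≤ (‖c‖ * |t|) ^ 3 * Real.exp ‖c‖ := by
      rw [hct]; gcongr; exact mul_le_of_le_one_right (norm_nonneg c) ht
    _ = ‖c‖ ^ 3 * Real.exp ‖c‖ * |t| ^ 3 := by ring

lemma norm_sinh_mul_sinh_ofReal {x y : ℝ} (hx : 0 ≤ x) (hy : 0 ≤ y) :
    ‖sinh x * sinh y‖ = Real.sinh x * Real.sinh y := by
  rw [← ofReal_sinh, ← ofReal_sinh, ← ofReal_mul, norm_real,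
    Real.norm_of_nonneg (by positivity)]

lemma exists_norm_sinh_mul_sinh_sub_le (c d : ℂ) :
    ∃ K, ∀ t : ℝ, |t| ≤ 1 → ‖sinh (c * t) * sinh (d * t) - c * d * t ^ 2‖ ≤ K * t ^ 4 := by
  set Ec := ‖c‖ ^ 3 * Real.exp ‖c‖
  set Ed := ‖d‖ ^ 3 * Real.exp ‖d‖
  refine ⟨‖c‖ * Ed + Ec * ‖d‖ + Ec * Ed, fun t ht ↦ ?_⟩
  have hc := norm_sinh_mul_sub_le c ht
  have hd := norm_sinh_mul_sub_le d ht
  have ht6 : |t| ^ 6 ≤ |t| ^ 4 := pow_le_pow_of_le_one (abs_nonneg t) ht (by norm_num)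
  have hEcd : 0 ≤ Ec * Ed := by positivity
  have hnorm (e : ℂ) : ‖e * t‖ = ‖e‖ * |t| := by rw [norm_mul, norm_real, Real.norm_eq_abs]
  calc ‖sinh (c * t) * sinh (d * t) - c * d * t ^ 2‖
      = ‖sinh (c * t) * sinh (d * t) - (c * t) * (d * t)‖ := by ring_nf
    _ ≤ ‖c * t‖ * (Ed * |t| ^ 3) + Ec * |t| ^ 3 * ‖d * t‖ + Ec * |t| ^ 3 * (Ed * |t| ^ 3) :=
      (norm_mul_sub_mul_le _ _ _ _).trans (by gcongr)
    _ = (‖c‖ * Ed + Ec * ‖d‖) * |t| ^ 4 + Ec * Ed * |t| ^ 6 := by rw [hnorm, hnorm]; ring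
    _ ≤ (‖c‖ * Ed + Ec * ‖d‖ + Ec * Ed) * t ^ 4 := by
      rw [← Even.pow_abs (by decide : Even 4) t]
      nlinarith [mul_le_mul_of_nonneg_left ht6 hEcd]

lemma exists_norm_sq_mul_sinh_mul_sinh_sub_sinh_sq_le {p q : ℂ} (hpq : p * q = 1 / 4) (a : ℂ) :
    ∃ K, ∀ t : ℝ, |t| ≤ 1 →
      ‖a ^ 2 * (sinh (p * t) * sinh (q * t)) - sinh (a * t / 2) ^ 2‖ ≤ K * t ^ 4 := by
  obtain ⟨K₁, hK₁⟩ := exists_norm_sinh_mul_sinh_sub_le p q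
  obtain ⟨K₂, hK₂⟩ := exists_norm_sinh_mul_sinh_sub_le (a / 2) (a / 2)
  refine ⟨‖a‖ ^ 2 * K₁ + K₂, fun t ht ↦ ?_⟩
  have hsplit : a ^ 2 * (sinh (p * t) * sinh (q * t)) - sinh (a * t / 2) ^ 2
      = a ^ 2 * (sinh (p * t) * sinh (q * t) - p * q * t ^ 2)
        - (sinh (a / 2 * t) * sinh (a / 2 * t) - a / 2 * (a / 2) * t ^ 2) := by
    rw [hpq]; ring_nf
  calc _ ≤ ‖a‖ ^ 2 * (K₁ * t ^ 4) + K₂ * t ^ 4 := by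
        rw [hsplit]
        refine (norm_sub_le _ _).trans (add_le_add ?_ (hK₂ t ht))
        rw [norm_mul, norm_pow]
        exact mul_le_mul_of_nonneg_left (hK₁ t ht) (by positivity)
    _ = (‖a‖ ^ 2 * K₁ + K₂) * t ^ 4 := by ring

end Complex

section upsilonIntegrand

open Complex

/-- With `(p, q) = (γ/4, 1/γ)` and `a = Q/2 - z` this is the integrand of `ln Υ_{γ/2}(z)`. -/
noncomputable def upsilonIntegrand (p q : ℝ) (a : ℂ) (t : ℝ) : ℂ :=
  (a ^ 2 * exp (-t) - sinh (a * t / 2) ^ 2 / (sinh (p * t) * sinh (q * t))) / t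

lemma measurable_upsilonIntegrand (p q : ℝ) (a : ℂ) : Measurable (upsilonIntegrand p q a) := by
  unfold upsilonIntegrand; fun_prop

variable {p q : ℝ} (hp : 0 < p) (hq : 0 < q)

include hp hq in
lemma exists_norm_upsilonIntegrand_le_of_mem_Ioc (hpq : p * q = 1 / 4) (a : ℂ) :
    ∃ M, ∀ t ∈ Ioc (0 : ℝ) 1, ‖upsilonIntegrand p q a t‖ ≤ M := by
  obtain ⟨K, hK⟩ := exists_norm_sq_mul_sinh_mul_sinh_sub_sinh_sq_le
    (p := p) (q := q) (by rw [← ofReal_mul, hpq]; norm_num) a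
  have hK0 : 0 ≤ K := by simpa using (norm_nonneg _).trans (hK 1 (by simp))
  refine ⟨2 * ‖a‖ ^ 2 + 4 * K, fun t ⟨ht0, ht1⟩ ↦ ?_⟩
  have htabs : |t| ≤ 1 := by rw [abs_of_pos ht0]; exact ht1
  set D := sinh (p * t) * sinh (q * t) with hD_def
  have hD : t ^ 2 / 4 ≤ ‖D‖ := by
    have hpt : 0 ≤ p * t := by positivity
    have hqt : 0 ≤ q * t := by positivity
    calc t ^ 2 / 4 = (p * t) * (q * t) := by linear_combination -(t ^ 2) * hpq
      _ ≤ Real.sinh (p * t) * Real.sinh (q * t) :=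
        mul_le_mul (Real.self_le_sinh_iff.2 hpt) (Real.self_le_sinh_iff.2 hqt) hqt
          (hpt.trans (Real.self_le_sinh_iff.2 hpt))
      _ = ‖D‖ := by rw [← norm_sinh_mul_sinh_ofReal hpt hqt]; push_cast; rfl
  have hD0 : D ≠ 0 := norm_pos_iff.1 (lt_of_lt_of_le (by positivity) hD)
  have hexp : ‖exp (-(t : ℂ)) - 1‖ ≤ 2 * t := by
    simpa [abs_of_pos ht0] using norm_exp_sub_one_le (x := -(t : ℂ)) (by simpa [abs_of_pos ht0])
  have hsplit : upsilonIntegrand p q a t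
      = (a ^ 2 * (exp (-t) - 1) + (a ^ 2 * D - sinh (a * t / 2) ^ 2) / D) / t := by
    rw [sub_div, mul_div_cancel_right₀ _ hD0, upsilonIntegrand, hD_def]; ring
  have hfrac : ‖(a ^ 2 * D - sinh (a * t / 2) ^ 2) / D‖ ≤ 4 * K * t ^ 2 := by
    rw [norm_div]
    calc _ ≤ K * t ^ 4 / (t ^ 2 / 4) := div_le_div₀ (by positivity) (hK t htabs) (by positivity) hD
      _ = 4 * K * t ^ 2 := by field_simp
  calc ‖upsilonIntegrand p q a t‖
      = ‖a ^ 2 * (exp (-t) - 1) + (a ^ 2 * D - sinh (a * t / 2) ^ 2) / D‖ / t := by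
        rw [hsplit, norm_div, norm_real, Real.norm_of_nonneg ht0.le]
    _ ≤ (‖a‖ ^ 2 * (2 * t) + 4 * K * t ^ 2) / t := by
        gcongr
        refine (norm_add_le _ _).trans (add_le_add ?_ hfrac)
        rw [norm_mul, norm_pow]
        exact mul_le_mul_of_nonneg_left hexp (by positivity)
    _ = 2 * ‖a‖ ^ 2 + 4 * K * t := by field_simp
    _ ≤ 2 * ‖a‖ ^ 2 + 4 * K := by
        rw [mul_assoc]
        gcongr
        exact mul_le_of_le_one_right hK0 ht1

include hp hq in
lemma exists_norm_upsilonIntegrand_le_exp (a : ℂ) :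
    ∃ C, ∀ t : ℝ, 1 ≤ t →
      ‖upsilonIntegrand p q a t‖
        ≤ ‖a‖ ^ 2 * Real.exp (-t) + C * Real.exp (-(p + q - |a.re|) * t) := by
  set c := Real.sinh p / Real.exp p * (Real.sinh q / Real.exp q)
  have hc : 0 < c := by positivity
  refine ⟨c⁻¹, fun t ht ↦ ?_⟩
  have hpt : p ≤ p * t := le_mul_of_one_le_right hp.le ht
  have hqt : q ≤ q * t := le_mul_of_one_le_right hq.le ht
  have hD : c * Real.exp ((p + q) * t) ≤ ‖sinh (p * t) * sinh (q * t)‖ := by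
    have hsp := Real.sinh_mul_exp_le_exp_mul_sinh hpt
    have hsq := Real.sinh_mul_exp_le_exp_mul_sinh hqt
    rw [show ((p : ℂ) * t) = ((p * t : ℝ) : ℂ) by push_cast; rfl,
      show ((q : ℂ) * t) = ((q * t : ℝ) : ℂ) by push_cast; rfl,
      norm_sinh_mul_sinh_ofReal (by positivity) (by positivity)]
    calc c * Real.exp ((p + q) * t)
        = (Real.sinh p * Real.exp (p * t) / Real.exp p)
          * (Real.sinh q * Real.exp (q * t) / Real.exp q) := by
          rw [add_mul, Real.exp_add]; ring
      _ ≤ Real.sinh (p * t) * Real.sinh (q * t) := by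
          gcongr
          · exact (div_le_iff₀' (Real.exp_pos p)).2 hsp
          · exact (div_le_iff₀' (Real.exp_pos q)).2 hsq
  have hS : ‖sinh (a * t / 2) ^ 2‖ ≤ Real.exp (|a.re| * t) := by
    have hre : |(a * t / 2).re| = |a.re| * t / 2 := by
      simp [abs_div, abs_mul, abs_of_pos (zero_lt_one.trans_le ht)]
    calc ‖sinh (a * t / 2) ^ 2‖ ≤ Real.exp (|a.re| * t / 2) ^ 2 := by
          rw [norm_pow, ← hre]; gcongr; exact norm_sinh_le_exp_abs_re _
      _ = Real.exp (|a.re| * t) := by rw [← Real.exp_nat_mul]; ring_nf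
  calc ‖upsilonIntegrand p q a t‖
      ≤ ‖a ^ 2 * exp (-t) - sinh (a * t / 2) ^ 2 / (sinh (p * t) * sinh (q * t))‖ := by
        rw [upsilonIntegrand, norm_div, norm_real, Real.norm_of_nonneg (by linarith)]
        exact div_le_self (norm_nonneg _) ht
    _ ≤ ‖a‖ ^ 2 * Real.exp (-t) + Real.exp (|a.re| * t) / (c * Real.exp ((p + q) * t)) := by
        refine (norm_sub_le _ _).trans (add_le_add (le_of_eq ?_) ?_)
        · rw [norm_mul, norm_pow, ← ofReal_neg, norm_exp_ofReal]
        · rw [norm_div]; gcongr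
    _ = ‖a‖ ^ 2 * Real.exp (-t) + c⁻¹ * Real.exp (-(p + q - |a.re|) * t) := by
        rw [show -(p + q - |a.re|) * t = |a.re| * t - (p + q) * t by ring, Real.exp_sub]
        field_simp

include hp hq in
theorem integrableOn_upsilonIntegrand (hpq : p * q = 1 / 4) {a : ℂ} (ha : |a.re| < p + q) :
    IntegrableOn (upsilonIntegrand p q a) (Ioi 0) := by
  obtain ⟨M, hM⟩ := exists_norm_upsilonIntegrand_le_of_mem_Ioc hp hq hpq a
  obtain ⟨C, hC⟩ := exists_norm_upsilonIntegrand_le_exp hp hq a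
  have hmeas := (measurable_upsilonIntegrand p q a).aestronglyMeasurable (μ := volume)
  rw [← Ioc_union_Ioi_eq_Ioi zero_le_one]
  refine IntegrableOn.union ?_ ?_
  · exact Measure.integrableOn_of_bounded measure_Ioc_lt_top.ne hmeas
      ((ae_restrict_iff' measurableSet_Ioc).2 (ae_of_all _ hM))
  · have hbound : IntegrableOn
        (fun t ↦ ‖a‖ ^ 2 * Real.exp (-t) + C * Real.exp (-(p + q - |a.re|) * t)) (Ioi 1) :=
      ((integrableOn_exp_neg_Ioi 1).const_mul _).add
        ((exp_neg_integrableOn_Ioi 1 (sub_pos.2 ha)).const_mul C)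
    exact hbound.mono' hmeas.restrict
      ((ae_restrict_iff' measurableSet_Ioi).2 (ae_of_all _ fun t ht ↦ hC t (le_of_lt ht)))

end upsilonIntegrand

theorem upsilon_integrand_integrable (γ : ℝ) (hγ : γ ∈ Set.Ioo (0:ℝ) 2) (z : ℂ)
    (hz0 : 0 < z.re) (hzQ : z.re < γ/2 + 2/γ) :
    MeasureTheory.IntegrableOn
      (fun t : ℝ =>
        ((((γ/2 + 2/γ : ℝ) : ℂ)/2 - z)^2 * Complex.exp (-(t:ℂ))
          - (Complex.sinh ((((γ/2 + 2/γ : ℝ) : ℂ)/2 - z) * t / 2))^2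
            / (Complex.sinh ((γ:ℂ) * t / 4) * Complex.sinh ((t:ℂ) / γ))) / (t:ℂ))
      (Set.Ioi 0) MeasureTheory.volume := by
  have hγ0 : 0 < γ := hγ.1
  have hstrip : |(((γ/2 + 2/γ : ℝ) : ℂ)/2 - z).re| < γ / 4 + 1 / γ := by
    have hQ : (γ/2 + 2/γ) / 2 = γ / 4 + 1 / γ := by ring
    rw [abs_lt, Complex.sub_re, Complex.div_ofNat_re, Complex.ofReal_re, hQ]
    constructor <;> linarith
  refine (integrableOn_upsilonIntegrand (by positivity) (by positivity) (by field_simp)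
    hstrip).congr_fun (fun t _ ↦ ?_) measurableSet_Ioi
  simp only [upsilonIntegrand]; push_cast; ring_nf
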